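/- If X ~ LL(σ₁,π₁) and Y ~ LL(σ₂,π₂) are independent, then P(Y < X) = ∫₀¹ f_X(x)·F_Y(x) dx equals σ₁/(σ₁+σ₂)³ · [σ₁(σ₁+3σ₂) + 2π₁σ₂² − 2π₂σ₁σ₂ + π₁π₂(σ₁σ₂ − σ₂²)]. -/

import Mathlib

/-!
On `(0, 1)` the integrand is `x ^ (σ₁ + σ₂ - 1)` times a quadratic polynomial in `-log x`. The
substitution `x = exp (-t)` turns the log-moments `∫₀¹ x ^ (s - 1) (-log x) ^ n dx` into the Gamma
integrals `∫₀^∞ tⁿ e^{-st} dt = n! / s ^ (n + 1)`, and the closed form is the resulting linear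
combination of `1 / s`, `1 / s ^ 2` and `2 / s ^ 3` with `s = σ₁ + σ₂`.
-/

open Real MeasureTheory Set
open scoped Nat Interval

theorem integral_pow_mul_exp_neg_mul_Ioi (n : ℕ) {r : ℝ} (hr : 0 < r) :
    ∫ t in Ioi 0, t ^ n * exp (-(r * t)) = n ! / r ^ (n + 1) := by
  have h := integral_rpow_mul_exp_neg_mul_Ioi (a := n + 1) (by positivity) hr
  simp only [add_sub_cancel_right, rpow_natCast, Gamma_nat_eq_factorial] at h
  rw [h, ← Nat.cast_add_one, rpow_natCast, div_pow, one_pow]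
  ring

theorem integrableOn_pow_mul_exp_neg_mul_Ioi (n : ℕ) {r : ℝ} (hr : 0 < r) :
    IntegrableOn (fun t ↦ t ^ n * exp (-(r * t))) (Ioi 0) :=
  .of_integral_ne_zero (by rw [integral_pow_mul_exp_neg_mul_Ioi n hr]; positivity)

theorem image_exp_neg_Ioi_zero : (fun t ↦ exp (-t)) '' Ioi 0 = Ioo 0 1 := by
  rw [← exp_zero, ← image_exp_Iio, ← neg_zero, ← image_neg_Ioi, image_image, neg_zero]

theorem hasDerivWithinAt_exp_neg (t : ℝ) (s : Set ℝ) :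
    HasDerivWithinAt (fun t ↦ exp (-t)) (-exp (-t)) s t := by
  simpa using ((hasDerivAt_neg t).exp).hasDerivWithinAt

theorem integral_Ioo_zero_one_comp_exp_neg (g : ℝ → ℝ) :
    ∫ x in Ioo 0 1, g x = ∫ t in Ioi 0, exp (-t) * g (exp (-t)) := by
  rw [← image_exp_neg_Ioi_zero, integral_image_eq_integral_abs_deriv_smul measurableSet_Ioi
    (fun t _ ↦ hasDerivWithinAt_exp_neg t _) (fun a _ b _ h ↦ neg_injective (exp_injective h))]
  simp [abs_of_pos (exp_pos _)]

theorem integrableOn_Ioo_zero_one_iff_comp_exp_neg (g : ℝ → ℝ) :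
    IntegrableOn g (Ioo 0 1) ↔ IntegrableOn (fun t ↦ exp (-t) * g (exp (-t))) (Ioi 0) := by
  rw [← image_exp_neg_Ioi_zero, integrableOn_image_iff_integrableOn_abs_deriv_smul
    measurableSet_Ioi (fun t _ ↦ hasDerivWithinAt_exp_neg t _)
    (fun a _ b _ h ↦ neg_injective (exp_injective h))]
  simp [abs_of_pos (exp_pos _)]

theorem exp_neg_mul_rpow_mul_neg_log_pow (s t : ℝ) (n : ℕ) :
    exp (-t) * (exp (-t) ^ (s - 1) * (-log (exp (-t))) ^ n) = t ^ n * exp (-(s * t)) := by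
  rw [log_exp, neg_neg, ← exp_mul, ← mul_assoc, ← exp_add]
  ring_nf

theorem intervalIntegrable_rpow_mul_neg_log_pow {s : ℝ} (hs : 0 < s) (n : ℕ) :
    IntervalIntegrable (fun x ↦ x ^ (s - 1) * (-log x) ^ n) volume 0 1 := by
  rw [intervalIntegrable_iff_integrableOn_Ioo_of_le zero_le_one,
    integrableOn_Ioo_zero_one_iff_comp_exp_neg]
  simpa only [exp_neg_mul_rpow_mul_neg_log_pow] using integrableOn_pow_mul_exp_neg_mul_Ioi n hs

theorem integral_rpow_mul_neg_log_pow {s : ℝ} (hs : 0 < s) (n : ℕ) :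
    ∫ x in 0..1, x ^ (s - 1) * (-log x) ^ n = n ! / s ^ (n + 1) := by
  rw [intervalIntegral.integral_of_le zero_le_one, integral_Ioc_eq_integral_Ioo,
    integral_Ioo_zero_one_comp_exp_neg]
  simpa only [exp_neg_mul_rpow_mul_neg_log_pow] using integral_pow_mul_exp_neg_mul_Ioi n hs

theorem integral_rpow_mul_quadratic_neg_log {s : ℝ} (hs : 0 < s) (a b c : ℝ) :
    ∫ x in 0..1, x ^ (s - 1) * (a + b * -log x + c * (-log x) ^ 2) =
      a / s + b / s ^ 2 + 2 * c / s ^ 3 := by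
  have hmoment := integral_rpow_mul_neg_log_pow hs
  have hint n := (intervalIntegrable_rpow_mul_neg_log_pow hs n).const_mul
  have hsplit : (fun x : ℝ ↦ x ^ (s - 1) * (a + b * -log x + c * (-log x) ^ 2)) = fun x ↦
      a * (x ^ (s - 1) * (-log x) ^ 0) + b * (x ^ (s - 1) * (-log x) ^ 1) +
        c * (x ^ (s - 1) * (-log x) ^ 2) := by
    ext x; ring
  rw [hsplit, intervalIntegral.integral_add ((hint 0 a).add (hint 1 b)) (hint 2 c),
    intervalIntegral.integral_add (hint 0 a) (hint 1 b), intervalIntegral.integral_const_mul,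
    intervalIntegral.integral_const_mul, intervalIntegral.integral_const_mul,
    hmoment, hmoment, hmoment]
  norm_num [Nat.factorial]
  ring

theorem logLindley_stress_strength_general (σ₁ π₁ σ₂ π₂ : ℝ) (hσ₁ : 0 < σ₁) (hσ₂ : 0 < σ₂) :
    ∫ x in (0:ℝ)..1,
        (σ₁ * (π₁ + σ₁ * (π₁ - 1) * Real.log x) * x ^ (σ₁ - 1)) *
          ((1 + σ₂ * (π₂ - 1) * Real.log x) * x ^ σ₂) =
      σ₁ / (σ₁ + σ₂) ^ 3 *
        (σ₁ * (σ₁ + 3 * σ₂) + 2 * π₁ * σ₂ ^ 2 - 2 * π₂ * σ₁ * σ₂ +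
          π₁ * π₂ * (σ₁ * σ₂ - σ₂ ^ 2)) := by
  have hs : 0 < σ₁ + σ₂ := add_pos hσ₁ hσ₂
  have hintegrand : ∀ x ∈ Ι (0 : ℝ) 1,
      (σ₁ * (π₁ + σ₁ * (π₁ - 1) * log x) * x ^ (σ₁ - 1)) *
          ((1 + σ₂ * (π₂ - 1) * log x) * x ^ σ₂) =
        x ^ (σ₁ + σ₂ - 1) * (σ₁ * π₁ + σ₁ * (σ₁ * (1 - π₁) + π₁ * σ₂ * (1 - π₂)) * -log x +
          σ₁ ^ 2 * σ₂ * (1 - π₁) * (1 - π₂) * (-log x) ^ 2) := by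
    intro x hx
    rw [uIoc_of_le zero_le_one] at hx
    rw [add_sub_right_comm, rpow_add hx.1]
    ring
  rw [intervalIntegral.integral_congr_ae (.of_forall hintegrand),
    integral_rpow_mul_quadratic_neg_log hs]
  field_simp
  ring

theorem logLindley_stress_strength (σ₁ π₁ σ₂ π₂ : ℝ) (hσ₁ : 0 < σ₁) (hσ₂ : 0 < σ₂)
    (hπ₁0 : 0 ≤ π₁) (hπ₁1 : π₁ ≤ 1) (hπ₂0 : 0 ≤ π₂) (hπ₂1 : π₂ ≤ 1) :
    ∫ x in (0:ℝ)..1,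
        (σ₁ * (π₁ + σ₁ * (π₁ - 1) * Real.log x) * x ^ (σ₁ - 1)) *
          ((1 + σ₂ * (π₂ - 1) * Real.log x) * x ^ σ₂) =
      σ₁ / (σ₁ + σ₂) ^ 3 *
        (σ₁ * (σ₁ + 3 * σ₂) + 2 * π₁ * σ₂ ^ 2 - 2 * π₂ * σ₁ * σ₂ +
          π₁ * π₂ * (σ₁ * σ₂ - σ₂ ^ 2)) :=
  logLindley_stress_strength_general σ₁ π₁ σ₂ π₂ hσ₁ hσ₂
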